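/- arXiv:1208.6416 — 7 statements merged into one kernel-verified Lean document; each statement's English description precedes it below -/
import Mathlib

section
/- (Bell's theorem, for the specific Bell table.) Label the four measurements a = 0, a' = 1, b = 2, b' = 3, with outcomes in Bool (false = 0, true = 1). There is no function d : (Fin 4 → Bool) → ℝ with d s ≥ 0 for all s and ∑_s d s = 1 (sum over all 16 functions s : Fin 4 → Bool) whose marginals reproduce the Bell table, i.e. writing m(i,j)(x,y) := ∑_{s : s i = x ∧ s j = y} d s, such that: m(0,2) assigns 1/2 to (0,0) and (1,1) and 0 to (0,1) and (1,0); m(1,2) and m(0,3) each assign 3/8 to (0,0) and (1,1) and 1/8 to (0,1) and (1,0); and m(1,3) assigns 1/8 to (0,0) and (1,1) and 3/8 to (0,1) and (1,0). -/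
/-!
For any distribution on global assignments, the disagreement probability `P(s i ≠ s j)` is a
pseudometric on measurements, since `{s a' ≠ s b'} ⊆ {s a' ≠ s b} ∪ {s b ≠ s a} ∪ {s a ≠ s b'}`.
The Bell table gives these four events probabilities `3/4`, `1/4`, `0` and `1/4`, violating the
triangle inequality.
-/

/-- The marginal of a distribution `d` on global assignments `s : Fin 4 → Bool`
onto the context consisting of measurements `i` and `j`, at joint outcome `(x, y)`. -/
def marg (d : (Fin 4 → Bool) → ℝ) (i j : Fin 4) (x y : Bool) : ℝ :=
  ∑ s ∈ Finset.univ.filter (fun s : Fin 4 → Bool => s i = x ∧ s j = y), d s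

open Finset

section Disagreement

variable {ι β : Type*} [Fintype ι] [DecidableEq ι] [Fintype β] [DecidableEq β]

def disagreement (d : (ι → β) → ℝ) (i j : ι) : ℝ :=
  ∑ s ∈ univ.filter (fun s : ι → β => s i ≠ s j), d s

theorem disagreement_comm (d : (ι → β) → ℝ) (i j : ι) :
    disagreement d i j = disagreement d j i := by
  simp only [disagreement, ne_comm]

theorem disagreement_triangle {d : (ι → β) → ℝ} (hd : ∀ s, 0 ≤ d s) (i j k : ι) :
    disagreement d i k ≤ disagreement d i j + disagreement d j k := by
  simp only [disagreement, sum_filter, ← sum_add_distrib]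
  refine sum_le_sum fun s _ => ?_
  have := hd s
  split_ifs <;> simp_all

end Disagreement

theorem disagreement_eq_marg (d : (Fin 4 → Bool) → ℝ) (i j : Fin 4) :
    disagreement d i j = marg d i j false true + marg d i j true false := by
  simp only [disagreement, marg, sum_filter, ← sum_add_distrib]
  refine sum_congr rfl fun s _ => ?_
  cases s i <;> cases s j <;> simp

/-- Bell's theorem for the Bell table: no probability distribution on global
assignments marginalizes to the empirical distributions of the Bell model.
Measurements: `a = 0`, `a' = 1`, `b = 2`, `b' = 3`; outcomes: `false = 0`, `true = 1`. -/
theorem bell_no_local_hidden_variable :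
    ¬ ∃ d : (Fin 4 → Bool) → ℝ,
      (∀ s, 0 ≤ d s) ∧ (∑ s : Fin 4 → Bool, d s = 1) ∧
      -- context (a, b)
      marg d 0 2 false false = 1/2 ∧ marg d 0 2 true true = 1/2 ∧
      marg d 0 2 false true = 0 ∧ marg d 0 2 true false = 0 ∧
      -- context (a', b)
      marg d 1 2 false false = 3/8 ∧ marg d 1 2 true true = 3/8 ∧
      marg d 1 2 false true = 1/8 ∧ marg d 1 2 true false = 1/8 ∧
      -- context (a, b')
      marg d 0 3 false false = 3/8 ∧ marg d 0 3 true true = 3/8 ∧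
      marg d 0 3 false true = 1/8 ∧ marg d 0 3 true false = 1/8 ∧
      -- context (a', b')
      marg d 1 3 false false = 1/8 ∧ marg d 1 3 true true = 1/8 ∧
      marg d 1 3 false true = 3/8 ∧ marg d 1 3 true false = 3/8 := by
  rintro ⟨d, hd, -, -, -, h02ft, h02tf, -, -, h12ft, h12tf, -, -, h03ft, h03tf, -, -, h13ft, h13tf⟩
  have hcover : disagreement d 1 3 ≤
      disagreement d 1 2 + (disagreement d 0 2 + disagreement d 0 3) := by
    calc disagreement d 1 3 ≤ disagreement d 1 2 + disagreement d 2 3 :=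
          disagreement_triangle hd 1 2 3
      _ ≤ disagreement d 1 2 + (disagreement d 2 0 + disagreement d 0 3) := by
          gcongr; exact disagreement_triangle hd 2 0 3
      _ = disagreement d 1 2 + (disagreement d 0 2 + disagreement d 0 3) := by
          rw [disagreement_comm d 2 0]
  simp only [disagreement_eq_marg] at hcover
  linarith
end

section
/- (Hardy's non-locality, relational form.) Label the four measurements a = 0, a' = 1, b = 2, b' = 3, with outcomes in Bool. There is no set R of functions s : Fin 4 → Bool such that: {(s 0, s 2) : s ∈ R} is the set of all four pairs in Bool × Bool; {(s 1, s 2) : s ∈ R} is the set of all pairs except (false, false); {(s 0, s 3) : s ∈ R} is the set of all pairs except (false, false); and {(s 1, s 3) : s ∈ R} is the set of all pairs except (true, true). Equivalently, the Hardy support table has no universal relation. -/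
/-!
A global assignment realising the outcome `(false, false)` on `(a, b)` is forced by the
contexts `(a', b)` and `(a, b')` to give `a' = true` and `b' = true`, which the context
`(a', b')` forbids. Every joint outcome of a universal relation comes from a global assignment,
so `(false, false)` on `(a, b)` cannot occur.
-/

theorem hardy_assignment_ne_false_false {ι : Type*} {s : ι → Bool} {a a' b b' : ι}
    (h_a'b : (s a', s b) ≠ (false, false)) (h_ab' : (s a, s b') ≠ (false, false))
    (h_a'b' : (s a', s b') ≠ (true, true)) : (s a, s b) ≠ (false, false) := by
  revert h_a'b h_ab' h_a'b'
  cases s a <;> cases s a' <;> cases s b <;> cases s b' <;> simp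

/-- Hardy's non-locality argument, relational form: the Hardy support table has no
universal relation. Measurements: `a = 0`, `a' = 1`, `b = 2`, `b' = 3`. -/
theorem hardy_no_universal_relation :
    ¬ ∃ R : Set (Fin 4 → Bool),
      ((fun s : Fin 4 → Bool => (s 0, s 2)) '' R = Set.univ) ∧
      ((fun s : Fin 4 → Bool => (s 1, s 2)) '' R = {p | p ≠ (false, false)}) ∧
      ((fun s : Fin 4 → Bool => (s 0, s 3)) '' R = {p | p ≠ (false, false)}) ∧
      ((fun s : Fin 4 → Bool => (s 1, s 3)) '' R = {p | p ≠ (true, true)}) := by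
  rintro ⟨R, h_ab, h_a'b, h_ab', h_a'b'⟩
  obtain ⟨s, hs, h_ff⟩ : ((false, false) : Bool × Bool) ∈ (fun s => (s 0, s 2)) '' R :=
    h_ab ▸ Set.mem_univ _
  exact hardy_assignment_ne_false_false (h_a'b.subset ⟨s, hs, rfl⟩) (h_ab'.subset ⟨s, hs, rfl⟩)
    (h_a'b'.subset ⟨s, hs, rfl⟩) h_ff
end

section
/- If an empirical model has a local hidden-variable model in the probabilistic sense, then its support table has a universal relation. Precisely: let Σ = {A₁, …, A_k} be a finite family of finite attribute sets with union A, let dᵢ be a finitely-supported function from Aᵢ-tuples to the nonnegative reals for each i, and suppose there is a finitely-supported function d from A-tuples to the nonnegative reals such that for every i and every Aᵢ-tuple u, dᵢ(u) = ∑_{t an A-tuple with t|_{Aᵢ} = u} d(t). Then the set R := supp(d) of A-tuples satisfies R|_{Aᵢ} = supp(dᵢ) for every i; in particular supp(d) is a universal relation for the instance (supp(d₁), …, supp(d_k)). Consequently, if the instance of supports has no universal relation, then no such d exists. -/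
/-! A finite sum of nonnegative reals vanishes exactly when every summand does. Hence the
marginal `dI i u`, the sum of `d` over the fibre of `u` under restriction, is nonzero exactly
when some tuple `t` restricting to `u` has `d t ≠ 0`. -/

/-- An `A`-tuple: a function assigning to each attribute `a ∈ A` a data value in `D a`. -/
def Tup {α : Type*} (D : α → Type*) (A : Finset α) : Type _ :=
  ∀ a : A, D a

/-- Restriction of an `A`-tuple to a subset `B ⊆ A`. -/
def Tup.restrict {α : Type*} {D : α → Type*} {A B : Finset α} (h : B ⊆ A)
    (t : Tup D A) : Tup D B :=
  fun b => t ⟨b.1, h b.2⟩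

section

open Set Function

theorem finsum_mem_eq_zero_iff_of_finite {β M : Type*} [AddCommMonoid M] [PartialOrder M]
    [CanonicallyOrderedAdd M] {d : β → M} {s : Set β} (hs : (s ∩ support d).Finite) :
    ∑ᶠ t ∈ s, d t = 0 ↔ ∀ t ∈ s, d t = 0 := by
  rw [finsum_mem_eq_sum d hs, Finset.sum_eq_zero_iff]
  simp only [Finite.mem_toFinset, mem_inter_iff, mem_support]
  grind

theorem image_support_eq_support_finsum_fiber {β γ M : Type*} [AddCommMonoid M] [PartialOrder M]
    [CanonicallyOrderedAdd M] (f : β → γ) {d : β → M} (hd : (support d).Finite) :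
    f '' support d = support fun u => ∑ᶠ (t) (_ : f t = u), d t := by
  ext u
  have hfibre :=
    finsum_mem_eq_zero_iff_of_finite (s := {t | f t = u}) (hd.subset inter_subset_right)
  simp only [mem_ofPred_eq] at hfibre
  simp only [mem_image, mem_support, ne_eq, hfibre]
  grind

end

theorem support_of_global_distribution_is_universal_relation_general
    {α : Type*} [DecidableEq α] {D : α → Type*} {k : ℕ}
    (A : Fin k → Finset α)
    (dI : ∀ i, Tup D (A i) → NNReal)
    (d : Tup D (Finset.univ.biUnion A) → NNReal)
    (hfin : (Function.support d).Finite)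
    (hmarg : ∀ i (u : Tup D (A i)),
      dI i u = ∑ᶠ (t : Tup D (Finset.univ.biUnion A))
        (_ : Tup.restrict (Finset.subset_biUnion_of_mem A (Finset.mem_univ i)) t = u),
        d t) :
    ∀ i, Tup.restrict (Finset.subset_biUnion_of_mem A (Finset.mem_univ i)) ''
          Function.support d = Function.support (dI i) := by
  intro i
  rw [show dI i = _ from funext (hmarg i)]
  exact image_support_eq_support_finsum_fiber _ hfin

/-- If a probabilistic instance `(d₁, …, d_k)` has a "local hidden-variable" model,
i.e. a finitely-supported global distribution `d` over tuples on the union of the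
attribute sets whose marginal on each `A i` is `d i`, then the support of `d` is a
universal relation for the instance of supports: its projection to each `A i` equals
the support of `dI i`. -/
theorem support_of_global_distribution_is_universal_relation
    {α : Type*} [DecidableEq α] {D : α → Type*} {k : ℕ}
    (A : Fin k → Finset α)
    (dI : ∀ i, Tup D (A i) → NNReal)
    (hIfin : ∀ i, (Function.support (dI i)).Finite)
    (d : Tup D (Finset.univ.biUnion A) → NNReal)
    (hfin : (Function.support d).Finite)
    (hmarg : ∀ i (u : Tup D (A i)),
      dI i u = ∑ᶠ (t : Tup D (Finset.univ.biUnion A))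
        (_ : Tup.restrict (Finset.subset_biUnion_of_mem A (Finset.mem_univ i)) t = u),
        d t) :
    ∀ i, Tup.restrict (Finset.subset_biUnion_of_mem A (Finset.mem_univ i)) ''
          Function.support d = Function.support (dI i) :=
  support_of_global_distribution_is_universal_relation_general A dI d hfin hmarg
end

section
/- (Strong contextuality of the GHZ models.) Let n ≥ 3. There is no function s : Fin n → Bool → ZMod 2 (assigning an outcome s i m to measurement m ∈ {X, Y} at part i, where false codes X and true codes Y) such that for every context c : Fin n → Bool, writing k for the number of indices i with c i = true (the number of Y measurements in the context): if k ≡ 0 (mod 4) then ∑_{i} s i (c i) = 0 in ZMod 2, and if k ≡ 2 (mod 4) then ∑_{i} s i (c i) = 1 in ZMod 2. -/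
/-! Write `d i = s i true - s i false`. The all-`X` context forces `∑ i, s i false = 0`, and
the context with `Y` exactly at two distinct parts `u, v` then forces `d u + d v = 1`, i.e.
`d u ≠ d v` in `ZMod 2`. So `d : Fin n → ZMod 2` is injective, which is impossible once
`n ≥ 3`. -/

open Finset

theorem sum_apply_eq_sum_false_add_sum_filter {ι G : Type*} [Fintype ι] [AddCommGroup G]
    (s : ι → Bool → G) (c : ι → Bool) :
    ∑ i, s i (c i) =
      ∑ i, s i false + ∑ i ∈ univ.filter (fun i => c i = true), (s i true - s i false) := by
  rw [sum_filter, ← sum_add_distrib]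
  refine sum_congr rfl fun i _ => ?_
  cases c i <;> simp

theorem filter_decide_mem_eq_true {ι : Type*} [Fintype ι] [DecidableEq ι] (t : Finset ι) :
    univ.filter (fun i => decide (i ∈ t) = true) = t := by
  ext i
  simp

theorem CharTwo.ne_of_add_eq_one {R : Type*} [Semiring R] [CharP R 2] [Nontrivial R] {x y : R}
    (h : x + y = 1) : x ≠ y := by
  rintro rfl
  rw [CharTwo.add_self_eq_zero] at h
  exact zero_ne_one h

/-- Strong contextuality of the GHZ models of type `(n, 2, 2)` for all `n ≥ 3`.
A global assignment is `s : Fin n → Bool → ZMod 2`, where `s i false` is the outcome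
for measurement `X` at part `i` and `s i true` the outcome for `Y` at part `i`.
A context `c : Fin n → Bool` selects `Y` at part `i` iff `c i = true`. No global
assignment lies in the GHZ support for every context: if the number of `Y`'s in the
context is `≡ 0 (mod 4)` the sum (mod 2) of outcomes must be `0`, and if it is
`≡ 2 (mod 4)` the sum must be `1`. -/
theorem ghz_strongly_contextual (n : ℕ) (hn : 3 ≤ n) :
    ¬ ∃ s : Fin n → Bool → ZMod 2,
      ∀ c : Fin n → Bool,
        ((Finset.univ.filter (fun i => c i = true)).card % 4 = 0 →
          ∑ i, s i (c i) = 0) ∧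
        ((Finset.univ.filter (fun i => c i = true)).card % 4 = 2 →
          ∑ i, s i (c i) = 1) := by
  rintro ⟨s, hs⟩
  set d : Fin n → ZMod 2 := fun i => s i true - s i false
  have hX : ∑ i, s i false = 0 := (hs fun _ => false).1 (by simp)
  have hpair (u v : Fin n) (huv : u ≠ v) : d u + d v = 1 := by
    have h := (hs fun i => decide (i ∈ ({u, v} : Finset (Fin n)))).2
      (by rw [filter_decide_mem_eq_true, card_pair huv])
    rwa [sum_apply_eq_sum_false_add_sum_filter, filter_decide_mem_eq_true, hX, zero_add,
      sum_pair huv] at h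
  have hinj : Function.Injective d := fun u v h => by
    by_contra huv
    exact CharTwo.ne_of_add_eq_one (hpair u v huv) h
  have := Fintype.card_le_of_injective d hinj
  simp only [Fintype.card_fin, ZMod.card] at this
  omega
end

section
/- (Combinatorial Kochen–Specker condition.) Let α be a finite type of attributes and Σ a finite family of finite subsets of α. Suppose there exists a global section s : α → Bool satisfying the one-in-each condition: for every A ∈ Σ, exactly one element a ∈ A has s a = true. Then every natural number that divides |Σ(a)| for every a ∈ α, where Σ(a) := {A ∈ Σ | a ∈ A}, also divides |Σ|. -/
/-! Double counting the incidences between `Sch` and the attributes on which `s` is true: each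
member of `Sch` contains exactly one of them, so `|Sch| = ∑_{s a} |Sch(a)|`, and a common divisor
of the `|Sch(a)|` divides the right-hand side. -/

namespace Finset

variable {α : Type*} [DecidableEq α] {B : Finset (Finset α)} {T : Finset α}

theorem card_eq_sum_card_filter_mem_of_card_inter_eq_one (h : ∀ A ∈ B, #(T ∩ A) = 1) :
    #B = ∑ a ∈ T, #{A ∈ B | a ∈ A} := by
  calc #B = ∑ A ∈ B, #{a ∈ T | a ∈ A} := by
        rw [card_eq_sum_ones]
        exact sum_congr rfl fun A hA ↦ by rw [filter_mem_eq_inter, h A hA]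
    _ = ∑ a ∈ T, #{A ∈ B | a ∈ A} :=
        (sum_card_bipartiteAbove_eq_sum_card_bipartiteBelow (· ∈ ·)).symm

theorem dvd_card_of_card_inter_eq_one (h : ∀ A ∈ B, #(T ∩ A) = 1) {m : ℕ}
    (hm : ∀ a ∈ T, m ∣ #{A ∈ B | a ∈ A}) : m ∣ #B :=
  card_eq_sum_card_filter_mem_of_card_inter_eq_one h ▸ dvd_sum hm

end Finset

theorem kochen_specker_divisibility_general
    {α : Type*} [DecidableEq α] (Sch : Finset (Finset α))
    (s : α → Bool)
    (hone : ∀ A ∈ Sch, (A.filter (fun a => s a = true)).card = 1) :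
    ∀ m : ℕ, (∀ a : α, m ∣ (Sch.filter (fun A => a ∈ A)).card) → m ∣ Sch.card := by
  intro m hm
  refine Finset.dvd_card_of_card_inter_eq_one (T := {a ∈ Sch.biUnion id | s a})
    (fun A hA ↦ ?_) fun a _ ↦ hm a
  have hsub : A ⊆ Sch.biUnion id := Finset.subset_biUnion_of_mem id hA
  rw [← hone A hA, Finset.filter_inter, Finset.inter_eq_right.mpr hsub]

/-- Combinatorial Kochen–Specker condition: if a schema `Sch` admits a global section
`s` with exactly one `true`-valued attribute in each member of `Sch`, then every
common divisor of the numbers `|Sch(a)| = |{A ∈ Sch | a ∈ A}|` divides `|Sch|`. -/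
theorem kochen_specker_divisibility
    {α : Type*} [Fintype α] [DecidableEq α] (Sch : Finset (Finset α))
    (s : α → Bool)
    (hone : ∀ A ∈ Sch, (A.filter (fun a => s a = true)).card = 1) :
    ∀ m : ℕ, (∀ a : α, m ∣ (Sch.filter (fun A => a ∈ A)).card) → m ∣ Sch.card :=
  kochen_specker_divisibility_general Sch s hone
end

section
/- (Parity proof of Kochen–Specker-type results.) Let α be a finite type of attributes and Σ a finite family of finite subsets of α. If every a ∈ α belongs to an even number of members of Σ (i.e. |Σ(a)| is even for every a, where Σ(a) := {A ∈ Σ | a ∈ A}), while |Σ| is odd, then there is no global section s : α → Bool such that every A ∈ Σ contains exactly one a with s a = true. -/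
/-!
Count the incidences `a ∈ A` with `A ∈ Sch` and `s a = true` in two ways. A section meeting each
member exactly once gives `|Sch|` incidences; grouped by attribute instead, they number
`∑_{s a = true} |Sch(a)|`, which is even.
-/

open Finset

section DoubleCounting

variable {α : Type*} [DecidableEq α]

theorem sum_card_filter_eq_sum_card_filter_mem (Sch : Finset (Finset α)) (p : α → Prop)
    [DecidablePred p] :
    ∑ A ∈ Sch, #{a ∈ A | p a} = ∑ a ∈ {a ∈ Sch.biUnion id | p a}, #{A ∈ Sch | a ∈ A} := by
  refine .trans ?_ (sum_card_bipartiteAbove_eq_sum_card_bipartiteBelow (r := fun A a => a ∈ A))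
  refine sum_congr rfl fun A hA => congrArg card ?_
  ext a
  simp only [bipartiteAbove, mem_filter, mem_biUnion, id]
  exact ⟨fun ⟨ha, hp⟩ => ⟨⟨⟨A, hA, ha⟩, hp⟩, ha⟩, fun ⟨⟨_, hp⟩, ha⟩ => ⟨ha, hp⟩⟩

theorem even_sum_card_filter_of_even_card_filter_mem (Sch : Finset (Finset α))
    (heven : ∀ a : α, Even #{A ∈ Sch | a ∈ A}) (p : α → Prop) [DecidablePred p] :
    Even (∑ A ∈ Sch, #{a ∈ A | p a}) := by
  rw [sum_card_filter_eq_sum_card_filter_mem]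
  exact even_sum _ fun a _ => heven a

end DoubleCounting

theorem kochen_specker_parity_general
    {α : Type*} [DecidableEq α] (Sch : Finset (Finset α))
    (heven : ∀ a : α, Even (Sch.filter (fun A => a ∈ A)).card)
    (hodd : Odd Sch.card) :
    ¬ ∃ s : α → Bool, ∀ A ∈ Sch, (A.filter (fun a => s a = true)).card = 1 := by
  rintro ⟨s, hs⟩
  have hcount : ∑ A ∈ Sch, #{a ∈ A | s a = true} = #Sch := by
    rw [sum_congr rfl hs, card_eq_sum_ones]
  have heven_card : Even #Sch :=
    hcount ▸ even_sum_card_filter_of_even_card_filter_mem Sch heven (s · = true)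
  exact Nat.not_even_iff_odd.mpr hodd heven_card

/-- Parity proof of Kochen–Specker-type results: if every attribute belongs to an even
number of members of the schema `Sch`, while `Sch` has an odd number of members, then
there is no global section with exactly one `true`-valued attribute in each member. -/
theorem kochen_specker_parity
    {α : Type*} [Fintype α] [DecidableEq α] (Sch : Finset (Finset α))
    (heven : ∀ a : α, Even (Sch.filter (fun A => a ∈ A)).card)
    (hodd : Odd Sch.card) :
    ¬ ∃ s : α → Bool, ∀ A ∈ Sch, (A.filter (fun a => s a = true)).card = 1 :=
  kochen_specker_parity_general Sch heven hodd
end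

section
/- (Special case of GHZ strong contextuality used in the paper's main argument, n divisible by 4.) Let n = 4k with k ≥ 1. There is no function s : Fin n → Bool → ZMod 2 such that: (1) ∑_i s i true = 0 in ZMod 2 (the all-Y context, with n ≡ 0 mod 4 Y's, has an even number of 1 outcomes), and (2) for every pair of distinct indices i ≠ j, the context obtained from all-Y by replacing positions i and j with X satisfies ∑_{l ≠ i, j} s l true + s i false + s j false = 1 in ZMod 2 (an odd number of 1 outcomes, since the number of Y's is then ≡ 2 mod 4). -/
/-!
Adding the parity condition of the all-`Y` context to that of the context with `X` at parts
`i ≠ j` leaves `(s i X + s i Y) + (s j X + s j Y) = 1` in `ZMod 2`. So `i ↦ s i X + s i Y` is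
injective into `ZMod 2`, which is impossible with `n = 4k ≥ 3` parts.
-/

open Finset

theorem ZMod.add_eq_one_iff_ne {a b : ZMod 2} : a + b = 1 ↔ a ≠ b := by
  revert a b
  decide

section
variable {ι : Type*} [Fintype ι]

theorem ghz_outcome_sum_add_eq_one [DecidableEq ι] {s : ι → Bool → ZMod 2}
    (hY : ∑ i, s i true = 0) {i j : ι} (hij : i ≠ j)
    (hXX : (∑ l ∈ univ \ {i, j}, s l true) + s i false + s j false = 1) :
    (s i false + s i true) + (s j false + s j true) = 1 := by
  rw [sum_sdiff_eq_sub (subset_univ _), sum_pair hij, hY, zero_sub,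
    ZMod.neg_eq_self_mod_two] at hXX
  linear_combination hXX

theorem Fintype.card_le_two_of_add_eq_one {t : ι → ZMod 2}
    (ht : ∀ i j, i ≠ j → t i + t j = 1) : Fintype.card ι ≤ 2 := by
  have ht_inj : Function.Injective t := fun i j hij => by
    by_contra hne
    exact ZMod.add_eq_one_iff_ne.mp (ht i j hne) hij
  simpa using Fintype.card_le_of_injective t ht_inj

end

/-- Strong contextuality of the GHZ model for `n = 4k`, `k ≥ 1`: no global assignment
`s : Fin n → Bool → ZMod 2` (with `s i false` the outcome for `X` at part `i` and
`s i true` the outcome for `Y` at part `i`) satisfies the parity conditions of the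
all-`Y` context (an even number of `1` outcomes) together with those of every context
obtained from it by replacing two `Y`'s by `X`'s (an odd number of `1` outcomes). -/
theorem ghz_strongly_contextual_four_k (k : ℕ) (hk : 1 ≤ k) (n : ℕ) (hn : n = 4 * k) :
    ¬ ∃ s : Fin n → Bool → ZMod 2,
      (∑ i, s i true = 0) ∧
      (∀ i j : Fin n, i ≠ j →
        (∑ l ∈ Finset.univ \ {i, j}, s l true) + s i false + s j false = 1) := by
  rintro ⟨s, hY, hXX⟩
  have hcard : Fintype.card (Fin n) ≤ 2 :=
    Fintype.card_le_two_of_add_eq_one (t := fun i => s i false + s i true)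
      fun i j hij => ghz_outcome_sum_add_eq_one hY hij (hXX i j hij)
  rw [Fintype.card_fin] at hcard
  omega
end
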